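/- arXiv:1709.07546 — 4 statements merged into one kernel-verified Lean document; each statement's English description precedes it below -/
import Mathlib

section
/- Let p ≡ 3 (mod 4) be an odd prime and q a prime power with q ≡ 3 (mod 4), gcd(p,q) = 1, and ord_{4p}(q) = p − 1. Then x^{2p} + 1 factors over F_q as a product of three irreducible polynomials: x² + 1 and two irreducible factors each of degree p − 1. -/
open Polynomial
open scoped IntermediateField

lemma aux_minpoly (F : Type*) [Field F] [Fintype F] (q n d : ℕ) (hq : Fintype.card F = q)
    (hn : 0 < n) (hd : 0 < d) (h2 : n ∣ q ^ d - 1)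
    (h1 : ∀ e, 0 < e → n ∣ q ^ e - 1 → d ≤ e)
    {x : AlgebraicClosure F} (hx : IsPrimitiveRoot x n) :
    (minpoly F x).natDegree = d := by
  have hq2 : 2 ≤ q := hq ▸ Fintype.one_lt_card
  have hxint : IsIntegral F x :=
    ⟨X ^ n - 1, monic_X_pow_sub_C 1 hn.ne', by simp [hx.pow_eq_one]⟩
  set m := (minpoly F x).natDegree with hm
  have hm0 : 0 < m := minpoly.natDegree_pos hxint
  -- the adjoined field
  haveI : FiniteDimensional F F⟮x⟯ := IntermediateField.adjoin.finiteDimensional hxint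
  haveI : Finite F⟮x⟯ := Module.finite_of_finite F
  haveI : Fintype F⟮x⟯ := Fintype.ofFinite _
  have hcard : Fintype.card F⟮x⟯ = q ^ m := by
    rw [Module.card_eq_pow_finrank (K := F), hq, IntermediateField.adjoin.finrank hxint]
  -- lower bound
  have hdm : d ≤ m := by
    set y := IntermediateField.AdjoinSimple.gen F x with hy
    have hmapy : algebraMap F⟮x⟯ (AlgebraicClosure F) y = x := IntermediateField.AdjoinSimple.algebraMap_gen F x
    have hyprim : IsPrimitiveRoot y n := by
      apply IsPrimitiveRoot.of_map_of_injective (f := algebraMap F⟮x⟯ (AlgebraicClosure F))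
      · rwa [hmapy]
      · exact (algebraMap F⟮x⟯ (AlgebraicClosure F)).injective
    have hy0 : y ≠ 0 := by
      intro h
      have := hyprim.pow_eq_one
      rw [h, zero_pow hn.ne'] at this
      exact zero_ne_one this
    have := FiniteField.pow_card_sub_one_eq_one y hy0
    rw [hcard] at this
    exact h1 m hm0 (hyprim.dvd_of_pow_eq_one _ this)
  -- upper bound
  have hmd : m ≤ d := by
    classical
    obtain ⟨r, hr⟩ := CharP.exists F
    haveI := hr
    obtain ⟨k, hrp, hqrk⟩ := FiniteField.card F r
    haveI : Fact r.Prime := ⟨hrp⟩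
    haveI : CharP (AlgebraicClosure F) r := charP_of_injective_algebraMap (algebraMap F (AlgebraicClosure F)).injective r
    haveI : ExpChar (AlgebraicClosure F) r := ExpChar.prime hrp
    set φ : AlgebraicClosure F →+* AlgebraicClosure F := iterateFrobenius (AlgebraicClosure F) r (k * d) with hφ
    have hφeq : ∀ z : AlgebraicClosure F, φ z = z ^ q ^ d := by
      intro z
      rw [hφ, iterateFrobenius_def]
      congr 1
      rw [← hq, hqrk, ← pow_mul]
    have hxfix : x ^ q ^ d = x := by
      have h1le : 1 ≤ q ^ d := Nat.one_le_pow _ _ (by omega)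
      have : x ^ (q ^ d - 1) = 1 := (hx.pow_eq_one_iff_dvd _).mpr h2
      calc x ^ q ^ d = x ^ (q ^ d - 1) * x := by
              rw [← pow_succ]; congr 1; omega
        _ = x := by rw [this, one_mul]
    set S : IntermediateField F (AlgebraicClosure F) :=
      { (φ.eqLocusField (RingHom.id (AlgebraicClosure F))) with
        algebraMap_mem' := fun a => by
          have : (algebraMap F (AlgebraicClosure F) a) ^ q ^ d = algebraMap F (AlgebraicClosure F) a := by
            rw [← map_pow]
            congr 1
            rw [← hq]
            exact FiniteField.pow_card_pow d a
          show φ (algebraMap F (AlgebraicClosure F) a) = algebraMap F (AlgebraicClosure F) a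
          rw [hφeq]; exact this } with hS
    have hxS : x ∈ S := by
      show φ x = x
      rw [hφeq]; exact hxfix
    have hle : F⟮x⟯ ≤ S := IntermediateField.adjoin_le_iff.mpr (by simpa using hxS)
    -- count roots
    set f : (AlgebraicClosure F)[X] := X ^ q ^ d - X with hf
    have hdeg : f.natDegree = q ^ d := by
      rw [hf, natDegree_sub_eq_left_of_natDegree_lt, natDegree_X_pow]
      rw [natDegree_X_pow, natDegree_X]
      exact Nat.one_lt_pow hd.ne' hq2
    have hf0 : f ≠ 0 := by
      intro h
      rw [h, natDegree_zero] at hdeg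
      have := Nat.one_le_pow d q (by omega)
      omega
    have hmem : ∀ z : F⟮x⟯, (z : AlgebraicClosure F) ∈ f.roots.toFinset := by
      intro z
      have hz : φ (z : AlgebraicClosure F) = (z : AlgebraicClosure F) := hle z.2
      rw [hφeq] at hz
      rw [Multiset.mem_toFinset, mem_roots hf0]
      simp only [hf, IsRoot, eval_sub, eval_pow, eval_X]
      rw [hz, sub_self]
    have hcardle : Fintype.card F⟮x⟯ ≤ q ^ d := by
      calc Fintype.card F⟮x⟯ = Finset.univ.card (α := F⟮x⟯) := (Finset.card_univ).symm
        _ ≤ f.roots.toFinset.card := Finset.card_le_card_of_injOn (fun z => (z : AlgebraicClosure F))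
            (fun z _ => hmem z) (Subtype.val_injective.injOn)
        _ ≤ Multiset.card f.roots := Multiset.toFinset_card_le _
        _ ≤ f.natDegree := f.card_roots'
        _ = q ^ d := hdeg
    rw [hcard] at hcardle
    exact (Nat.pow_le_pow_iff_right hq2).mp hcardle
  omega

lemma aux_dvd_four_mul {p d : ℕ} (hp : p.Prime) (hodd : p % 2 = 1) (h4 : d ∣ 4 * p)
    (h2 : ¬ d ∣ 2 * p) : d = 4 ∨ d = 4 * p := by
  obtain ⟨a, b, ha, hb, hab⟩ := Nat.dvd_mul.mp h4
  have ha2 : a ∣ 2 ∨ a = 4 := by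
    have ha4 := Nat.le_of_dvd (by norm_num) ha
    have ha1 : 1 ≤ a := Nat.pos_of_dvd_of_pos ha (by norm_num)
    interval_cases a
    · exact Or.inl (one_dvd 2)
    · exact Or.inl dvd_rfl
    · exfalso; omega
    · exact Or.inr rfl
  rcases ha2 with ha2 | rfl
  · exact absurd (hab ▸ mul_dvd_mul ha2 hb) h2
  · rcases hp.eq_one_or_self_of_dvd b hb with rfl | rfl
    · left; omega
    · right; omega

theorem stmt3 (F : Type*) [Field F] [Fintype F] (p q : ℕ) (hq : Fintype.card F = q)
    (hp : p.Prime) (hp4 : p % 4 = 3) (hq4 : q % 4 = 3) (hcop : Nat.Coprime p q)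
    (hord : orderOf (q : ZMod (4 * p)) = p - 1) :
    Irreducible (X ^ 2 + 1 : F[X]) ∧
    ∃ g₁ g₂ : F[X], Irreducible g₁ ∧ Irreducible g₂ ∧
      g₁.natDegree = p - 1 ∧ g₂.natDegree = p - 1 ∧
      (X ^ (2 * p) + 1 : F[X]) = (X ^ 2 + 1) * g₁ * g₂ := by
  have hp3 : 3 ≤ p := by
    rcases Nat.lt_or_ge p 3 with h | h
    · interval_cases p <;> omega
    · exact h
  have hq3 : 3 ≤ q := by
    rcases Nat.lt_or_ge q 3 with h | h
    · interval_cases q <;> omega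
    · exact h
  have hpodd : p % 2 = 1 := by omega
  have hqodd : q % 2 = 1 := by omega
  -- characteristic facts
  obtain ⟨r, hr⟩ := CharP.exists F
  haveI := hr
  obtain ⟨k, hrp, hqrk⟩ := FiniteField.card F r
  rw [hq] at hqrk
  haveI : Fact r.Prime := ⟨hrp⟩
  have hrdvdq : r ∣ q := hqrk ▸ dvd_pow_self r k.pos.ne'
  have hrodd : r % 2 = 1 := by
    rcases hrp.eq_two_or_odd with h | h
    · subst h; obtain ⟨c, hc⟩ := hrdvdq; omega
    · exact h
  have hrp' : r ∣ p → False := fun h => by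
    have := Nat.Coprime.eq_one_of_dvd (Nat.Coprime.coprime_dvd_left h hcop) ?_
    · exact absurd this hrp.one_lt.ne'
    · exact hrdvdq
  have hrn : ¬ r ∣ 4 * p := by
    intro h
    rcases (Nat.Prime.dvd_mul hrp).mp h with h | h
    · have h4 := Nat.le_of_dvd (by norm_num) h
      have h2 := hrp.two_le
      interval_cases r <;> omega
    · exact hrp' h
  have hn0 : 0 < 4 * p := by positivity
  -- cast 4p nonzero in F and its algebraic closure
  have hNF : ((4 * p : ℕ) : F) ≠ 0 := by
    rw [Ne, CharP.cast_eq_zero_iff F r]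
    exact hrn
  haveI : CharP (AlgebraicClosure F) r :=
    charP_of_injective_algebraMap (algebraMap F (AlgebraicClosure F)).injective r
  haveI : NeZero ((4 * p : ℕ) : AlgebraicClosure F) := by
    constructor
    rw [Ne, CharP.cast_eq_zero_iff (AlgebraicClosure F) r]
    exact hrn
  -- order hypothesis reformulated
  have horder : ∀ e : ℕ, (4 * p ∣ q ^ e - 1 ↔ (p - 1) ∣ e) := by
    intro e
    have h1q : 1 ≤ q ^ e := Nat.one_le_pow _ _ (by omega)
    rw [← hord, orderOf_dvd_iff_pow_eq_one]
    constructor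
    · intro h
      have : ((q ^ e - 1 : ℕ) : ZMod (4 * p)) = 0 := (ZMod.natCast_eq_zero_iff _ _).mpr h
      rw [Nat.cast_sub h1q, Nat.cast_pow, Nat.cast_one, sub_eq_zero] at this
      exact this
    · intro h
      rw [← ZMod.natCast_eq_zero_iff, Nat.cast_sub h1q, Nat.cast_pow, Nat.cast_one,
        sub_eq_zero]
      exact_mod_cast h
  -- X^2+1 facts
  have hX2monic : (X ^ 2 + 1 : F[X]).Monic := by
    have := monic_X_pow_sub_C (-1 : F) (n := 2) (by norm_num)
    simpa [sub_neg_eq_add] using this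
  have hX2deg : (X ^ 2 + 1 : F[X]).natDegree = 2 := by
    compute_degree!
  have hX2 : Irreducible (X ^ 2 + 1 : F[X]) := by
    rw [irreducible_iff_roots_eq_zero_of_degree_le_three (by omega) (by omega)]
    rw [Multiset.eq_zero_iff_forall_notMem]
    intro a ha
    rw [mem_roots (hX2monic.ne_zero), IsRoot, eval_add, eval_pow, eval_X, eval_one] at ha
    have : IsSquare (-1 : F) := ⟨a, by rw [← sq]; linear_combination -ha⟩
    rw [FiniteField.isSquare_neg_one_iff, hq] at this
    omega
  -- primitive 4p-th root of unity
  obtain ⟨ζ, hζ⟩ := HasEnoughRootsOfUnity.exists_primitiveRoot (AlgebraicClosure F) (4 * p)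
  have hζ2p : ζ ^ (2 * p) = -1 := by
    have hsq : (ζ ^ (2 * p)) * (ζ ^ (2 * p)) = 1 := by
      rw [← pow_add, show 2 * p + 2 * p = 4 * p by ring]
      exact hζ.pow_eq_one
    rcases mul_self_eq_one_iff.mp hsq with h | h
    · exfalso
      have hd := hζ.dvd_of_pow_eq_one _ h
      have := Nat.le_of_dvd (by omega) hd
      omega
    · exact h
  have hint : ∀ z : AlgebraicClosure F, z ^ (2 * p) = -1 → IsIntegral F z := by
    intro z hz
    refine ⟨X ^ (2 * p) + 1, ?_, ?_⟩
    · simpa [sub_neg_eq_add] using monic_X_pow_sub_C (-1 : F) (n := 2 * p) (by omega)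
    · simp [hz]
  set N : F[X] := X ^ (2 * p) + 1 with hN
  have hNmonic : N.Monic := by
    simpa [sub_neg_eq_add] using monic_X_pow_sub_C (-1 : F) (n := 2 * p) (by omega)
  have hNdeg : N.natDegree = 2 * p := by
    rw [hN, show (X ^ (2 * p) + 1 : F[X]) = X ^ (2 * p) - C (-1) by
      rw [map_neg, map_one, sub_neg_eq_add]]
    exact natDegree_X_pow_sub_C
  have haevalN : ∀ z : AlgebraicClosure F, z ^ (2 * p) = -1 → aeval z N = 0 := by
    intro z hz
    rw [hN]
    simp [hz]
  have hminζ : ∀ z : AlgebraicClosure F, IsPrimitiveRoot z (4 * p) →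
      (minpoly F z).natDegree = p - 1 :=
    fun z hz => aux_minpoly F q (4 * p) (p - 1) hq hn0 (by omega)
      ((horder (p - 1)).mpr dvd_rfl)
      (fun e he hdvd => Nat.le_of_dvd he ((horder e).mp hdvd)) hz
  set g₁ := minpoly F ζ with hg₁
  have hg₁irr : Irreducible g₁ := minpoly.irreducible (hint ζ hζ2p)
  have hg₁monic : g₁.Monic := minpoly.monic (hint ζ hζ2p)
  have hg₁deg : g₁.natDegree = p - 1 := hminζ ζ hζ
  have hg₁dvd : g₁ ∣ N := minpoly.dvd F ζ (haevalN ζ hζ2p)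
  -- X²+1 divides N
  have hidvd : (X ^ 2 + 1 : F[X]) ∣ N := by
    have hi2 : (ζ ^ p) ^ (2 * p) = -1 := by
      rw [← pow_mul, show p * (2 * p) = (2 * p) * p by ring, pow_mul, hζ2p]
      exact Odd.neg_one_pow (Nat.odd_iff.mpr hpodd)
    have haev : aeval (ζ ^ p) (X ^ 2 + 1 : F[X]) = 0 := by
      have h2 : (ζ ^ p) ^ 2 = -1 := by rw [← pow_mul, show p * 2 = 2 * p by ring]; exact hζ2p
      simp [h2]
    have hdv := minpoly.dvd F (ζ ^ p) (haevalN _ hi2)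
    have heq : minpoly F (ζ ^ p) = X ^ 2 + 1 :=
      (minpoly.eq_of_irreducible_of_monic hX2 haev hX2monic).symm
    rwa [heq] at hdv
  -- coprimality
  have hζsq : ζ ^ 2 ≠ -1 := by
    intro h
    have h4 : ζ ^ 4 = 1 := by
      rw [show 4 = 2 * 2 by rfl, pow_mul, h]; ring
    have hd := hζ.dvd_of_pow_eq_one _ h4
    have := Nat.le_of_dvd (by omega) hd
    omega
  have hne : (X ^ 2 + 1 : F[X]) ≠ g₁ := by
    intro h
    have haevζ : aeval ζ (X ^ 2 + 1 : F[X]) = 0 := by rw [h, hg₁]; exact minpoly.aeval F ζ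
    rw [map_add, map_pow, aeval_X, map_one] at haevζ
    exact hζsq (by linear_combination haevζ)
  have hcop2 : IsCoprime (X ^ 2 + 1 : F[X]) g₁ := by
    rw [hX2.coprime_iff_not_dvd]
    intro hdvd
    obtain ⟨c, hc⟩ := hdvd
    rcases hg₁irr.isUnit_or_isUnit hc with h | h
    · exact hX2.not_isUnit h
    · obtain ⟨u, hu, huc⟩ := Polynomial.isUnit_iff.mp h
      rw [← huc] at hc
      have hlc : g₁.leadingCoeff = u := by
        rw [hc, leadingCoeff_mul, hX2monic.leadingCoeff, one_mul, leadingCoeff_C]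
      rw [hg₁monic.leadingCoeff] at hlc
      rw [← hlc, map_one, mul_one] at hc
      exact hne hc.symm
  have hmuldvd : (X ^ 2 + 1) * g₁ ∣ N := hcop2.mul_dvd hidvd hg₁dvd
  obtain ⟨g₂, hg₂⟩ := hmuldvd
  have hprodmonic : ((X ^ 2 + 1 : F[X]) * g₁).Monic := hX2monic.mul hg₁monic
  have hg₂monic : g₂.Monic := hprodmonic.of_mul_monic_left (hg₂ ▸ hNmonic)
  have hg₂0 : g₂ ≠ 0 := hg₂monic.ne_zero
  have hdeg2 : g₂.natDegree = p - 1 := by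
    have hND := congrArg natDegree hg₂
    rw [hNdeg, natDegree_mul (hprodmonic.ne_zero) hg₂0,
      natDegree_mul hX2monic.ne_zero hg₁monic.ne_zero, hX2deg, hg₁deg] at hND
    omega
  -- squarefreeness of N
  have h2pF : ((2 * p : ℕ) : F) ≠ 0 := by
    rw [Ne, CharP.cast_eq_zero_iff F r]
    intro hd
    rcases (Nat.Prime.dvd_mul hrp).mp hd with h | h
    · have := Nat.le_of_dvd (by norm_num) h
      have := hrp.two_le
      omega
    · exact hrp' h
  have hNsf : Squarefree N := by
    have : N = X ^ (2 * p) - C (-1 : F) := by rw [hN, map_neg, map_one, sub_neg_eq_add]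
    rw [this]
    exact (separable_X_pow_sub_C (-1 : F) h2pF (by norm_num)).squarefree
  -- irreducibility of g₂
  have hg₂irr : Irreducible g₂ := by
    have hdegmap : (g₂.map (algebraMap F (AlgebraicClosure F))).degree ≠ 0 := by
      rw [degree_map, degree_eq_natDegree hg₂0, hdeg2]
      simp only [ne_eq, Nat.cast_eq_zero]
      omega
    obtain ⟨ξ, hξ⟩ := IsAlgClosed.exists_root _ hdegmap
    have hξg₂ : aeval ξ g₂ = 0 := by rwa [IsRoot, eval_map, ← aeval_def] at hξ
    have hξN : ξ ^ (2 * p) = -1 := by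
      have haevξ : aeval ξ N = 0 := by
        rw [hg₂, map_mul, hξg₂, mul_zero]
      rw [hN, map_add, map_pow, aeval_X, map_one] at haevξ
      linear_combination haevξ
    have hξ4p : ξ ^ (4 * p) = 1 := by
      rw [show 4 * p = 2 * p * 2 by ring, pow_mul, hξN]; ring
    have hdvd4p : orderOf ξ ∣ 4 * p := orderOf_dvd_of_pow_eq_one hξ4p
    have hnot2p : ¬ orderOf ξ ∣ 2 * p := by
      intro h
      have h1 : ξ ^ (2 * p) = 1 := orderOf_dvd_iff_pow_eq_one.mp h
      rw [hξN] at h1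
      have h2 : ((2 : ℕ) : AlgebraicClosure F) ≠ 0 := by
        rw [Ne, CharP.cast_eq_zero_iff _ r]
        intro hd
        have := Nat.le_of_dvd (by norm_num) hd
        have := hrp.two_le
        omega
      apply h2
      push_cast
      linear_combination -h1
    rcases aux_dvd_four_mul hp hpodd hdvd4p hnot2p with hdd | hdd
    · -- order 4 : contradiction with squarefree
      exfalso
      have hξ2 : ξ ^ 2 = -1 := by
        have hsq : (ξ ^ 2) * (ξ ^ 2) = 1 := by
          rw [← pow_add]
          rw [show (2 + 2 : ℕ) = 4 by rfl, ← hdd]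
          exact pow_orderOf_eq_one ξ
        rcases mul_self_eq_one_iff.mp hsq with h | h
        · exfalso
          have := orderOf_dvd_of_pow_eq_one h
          rw [hdd] at this
          have := Nat.le_of_dvd (by norm_num) this
          omega
        · exact h
      have haev : aeval ξ (X ^ 2 + 1 : F[X]) = 0 := by simp [hξ2]
      have heq : minpoly F ξ = X ^ 2 + 1 :=
        (minpoly.eq_of_irreducible_of_monic hX2 haev hX2monic).symm
      have hdvd : (X ^ 2 + 1 : F[X]) ∣ g₂ := heq ▸ minpoly.dvd F ξ hξg₂
      obtain ⟨c, hc⟩ := hdvd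
      have : (X ^ 2 + 1 : F[X]) * (X ^ 2 + 1) ∣ N := by
        refine ⟨g₁ * c, ?_⟩
        rw [hg₂, hc]; ring
      exact hX2.not_isUnit (hNsf _ this)
    · -- order 4p : g₂ is the minimal polynomial of ξ
      have hprim : IsPrimitiveRoot ξ (4 * p) := hdd ▸ IsPrimitiveRoot.orderOf ξ
      have hintξ : IsIntegral F ξ := hint ξ hξN
      have hmindeg : (minpoly F ξ).natDegree = p - 1 := hminζ ξ hprim
      obtain ⟨c, hc⟩ := minpoly.dvd F ξ hξg₂
      have hcmonic : c.Monic := (minpoly.monic hintξ).of_mul_monic_left (hc ▸ hg₂monic)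
      have hcdeg : c.natDegree = 0 := by
        have := congrArg natDegree hc
        rw [hdeg2, natDegree_mul (minpoly.ne_zero hintξ) hcmonic.ne_zero, hmindeg] at this
        omega
      have hc1 : c = 1 := hcmonic.natDegree_eq_zero.mp hcdeg
      rw [hc1, mul_one] at hc
      rw [hc]
      exact minpoly.irreducible hintξ
  exact ⟨hX2, g₁, g₂, hg₁irr, hg₂irr, hg₁deg, hdeg2, hg₂⟩
end

section
/- Let p ≡ 3 (mod 4) be prime, q ≡ 3 (mod 4) a prime power coprime to p, with ord_{4p}(q) = p − 1 and ord_p(q) ≡ 2 (mod 4). Then each of the two degree-(p−1) irreducible factors of x^{2p}+1 over F_q (other than x²+1) is self-reciprocal. -/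
open Polynomial

lemma aux_selfrecip (F : Type*) [Field F] [Fintype F] (q n m : ℕ)
    (hq : Fintype.card F = q) (hn : 0 < n) (hdl : n ∣ q ^ m + 1)
    (g : F[X]) (hg : Irreducible g) (hgd : g ∣ X ^ n - 1) :
    ∃ c : F, c ≠ 0 ∧ g.reverse = c • g := by
  have hg0 : g ≠ 0 := hg.ne_zero
  haveI : Fact (Irreducible g) := ⟨hg⟩
  set K := AdjoinRoot g
  haveI : Module.Finite F K := (AdjoinRoot.powerBasis hg0).finite
  haveI : Finite K := Module.finite_of_finite F
  haveI : Fintype K := Fintype.ofFinite K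
  set r := ringChar F with hr
  haveI : CharP F r := ringChar.charP F
  obtain ⟨s, hrp, hcard⟩ := FiniteField.card F r
  haveI : Fact r.Prime := ⟨hrp⟩
  haveI : CharP K r := charP_of_injective_algebraMap (algebraMap F K).injective r
  have hq' : q = r ^ (s : ℕ) := hq ▸ hcard
  set φ : K →+* K := iterateFrobenius K r s with hφ
  have hφdef : ∀ x : K, φ x = x ^ q := by
    intro x; rw [hφ, iterateFrobenius_def, hq']
  have hfix : φ.comp (algebraMap F K) = algebraMap F K := by
    ext c
    rw [RingHom.comp_apply, hφdef, ← map_pow, ← hq, FiniteField.pow_card]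
  have hstep : ∀ x : K, (aeval x) g = 0 → (aeval (x ^ q)) g = 0 := by
    intro x hx
    have : φ ((aeval x) g) = (aeval (x ^ q)) g := by
      rw [aeval_def, aeval_def, hom_eval₂, hfix, hφdef]
    rw [← this, hx, map_zero]
  set ζ : K := AdjoinRoot.root g with hζ
  have hroot : (aeval ζ) g = 0 := by
    rw [AdjoinRoot.aeval_eq, AdjoinRoot.mk_self]
  have hζn : ζ ^ n = 1 := by
    obtain ⟨t, ht⟩ := hgd
    have : (aeval ζ) (X ^ n - 1 : F[X]) = 0 := by
      rw [ht, map_mul, hroot, zero_mul]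
    have h2 : ζ ^ n - 1 = 0 := by simpa using this
    linear_combination h2
  have hpowroot : ∀ j : ℕ, (aeval (ζ ^ q ^ j)) g = 0 := by
    intro j
    induction j with
    | zero => simpa using hroot
    | succ j ih =>
      have : ζ ^ q ^ (j + 1) = (ζ ^ q ^ j) ^ q := by
        rw [← pow_mul, pow_succ]
      rw [this]
      exact hstep _ ih
  obtain ⟨t, ht⟩ := hdl
  have hinv : ζ ^ q ^ m * ζ = 1 := by
    rw [← pow_succ, ht, pow_mul, hζn, one_pow]
  letI : Invertible (ζ ^ q ^ m) := ⟨ζ, by rw [mul_comm]; exact hinv, hinv⟩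
  have hrev : (aeval ζ) g.reverse = 0 := by
    have := (eval₂_reverse_eq_zero_iff (algebraMap F K) (ζ ^ q ^ m) g).mpr
      (by rw [← aeval_def]; exact hpowroot m)
    have hio : (⅟(ζ ^ q ^ m) : K) = ζ := rfl
    rwa [hio, ← aeval_def] at this
  have hmin : minpoly F ζ = g * C g.leadingCoeff⁻¹ := AdjoinRoot.minpoly_root hg0
  have hdvd2 : g ∣ g.reverse := by
    have h1 : minpoly F ζ ∣ g.reverse := minpoly.dvd F ζ hrev
    exact dvd_trans (dvd_mul_right g (C g.leadingCoeff⁻¹)) (hmin ▸ h1)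
  obtain ⟨u, hu⟩ := hdvd2
  have hc0 : g.coeff 0 ≠ 0 := by
    intro h
    have hXg : (X : F[X]) ∣ g := X_dvd_iff.mpr h
    have hXd : (X : F[X]) ∣ X ^ n - 1 := hXg.trans hgd
    have h0 : (X ^ n - 1 : F[X]).coeff 0 = 0 := by
      obtain ⟨w, hw⟩ := hXd
      rw [hw, coeff_zero_eq_eval_zero, eval_mul, eval_X, zero_mul]
    rw [coeff_sub, coeff_X_pow, coeff_one, if_neg (by omega : ¬ 0 = n),
      if_pos rfl] at h0
    norm_num at h0
  have hrev0 : g.reverse ≠ 0 := by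
    rw [Ne, reverse_eq_zero]; exact hg0
  have hdeg : g.reverse.natDegree = g.natDegree := by
    rw [reverse_natDegree, natTrailingDegree_eq_zero.mpr (Or.inr hc0), Nat.sub_zero]
  have hu0 : u ≠ 0 := by
    intro h; rw [h, mul_zero] at hu; exact hrev0 hu
  have hudeg : u.natDegree = 0 := by
    have h := hdeg
    rw [hu, natDegree_mul hg0 hu0] at h
    omega
  obtain ⟨c, rfl⟩ : ∃ c : F, u = C c := ⟨u.coeff 0, eq_C_of_natDegree_eq_zero hudeg⟩
  refine ⟨c, ?_, ?_⟩
  · intro h; rw [h, map_zero] at hu0; exact hu0 rfl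
  · rw [hu, smul_eq_C_mul, mul_comm]

theorem stmt5 (F : Type*) [Field F] [Fintype F] (p q : ℕ) (hq : Fintype.card F = q)
    (hp : p.Prime) (hp4 : p % 4 = 3) (hq4 : q % 4 = 3) (hcop : Nat.Coprime p q)
    (hord : orderOf (q : ZMod (4 * p)) = p - 1)
    (hord2 : orderOf (q : ZMod p) % 4 = 2)
    (g₁ g₂ : F[X]) (hg₁ : Irreducible g₁) (hg₂ : Irreducible g₂)
    (hd₁ : g₁.natDegree = p - 1) (hd₂ : g₂.natDegree = p - 1)
    (hfac : (X ^ (2 * p) + 1 : F[X]) = (X ^ 2 + 1) * g₁ * g₂) :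
    (∃ c : F, c ≠ 0 ∧ g₁.reverse = c • g₁) ∧ (∃ c : F, c ≠ 0 ∧ g₂.reverse = c • g₂) := by
  haveI : Fact p.Prime := ⟨hp⟩
  have hp3 : 3 ≤ p := by omega
  have hcop4 : Nat.Coprime 4 p := by
    have hnd : ¬ (p ∣ 4) := by
      intro h
      have : p ∣ 2 := hp.dvd_of_dvd_pow (n := 2) (by simpa using h)
      have := Nat.le_of_dvd (by norm_num) this
      omega
    exact ((hp.coprime_iff_not_dvd).mpr hnd).symm
  set e := ZMod.chineseRemainder hcop4 with he
  have h2q : e (q : ZMod (4 * p)) = ((q : ZMod 4), (q : ZMod p)) := by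
    rw [map_natCast]
    ext <;> simp
  have hd : orderOf (q : ZMod p) = p - 1 := by
    have h1 : orderOf ((q : ZMod 4), (q : ZMod p)) = p - 1 := by
      rw [← h2q, show (e ((q : ZMod (4 * p)))) = e.toMulEquiv (q : ZMod (4 * p)) from rfl,
        e.toMulEquiv.orderOf_eq, hord]
    rw [Prod.orderOf] at h1
    have h3 : orderOf (q : ZMod 4) = 2 := by
      have h : (q : ZMod 4) = 3 := by
        rw [← ZMod.natCast_mod, hq4]; rfl
      rw [h]
      exact orderOf_eq_prime (by decide) (by decide)
    rw [h3] at h1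
    have h4 : 2 ∣ orderOf (q : ZMod p) := by omega
    have h5 : Nat.lcm 2 (orderOf (q : ZMod p)) = orderOf (q : ZMod p) :=
      Nat.dvd_antisymm (Nat.lcm_dvd h4 dvd_rfl) (Nat.dvd_lcm_right _ _)
    rw [h5] at h1
    exact h1
  set k := 2 * (p / 4) + 1 with hk
  have hpk : p - 1 = 2 * k := by omega
  have hkodd : Odd k := ⟨p / 4, by omega⟩
  have hmodp : (q : ZMod p) ^ k = -1 := by
    have hx2 : ((q : ZMod p) ^ k) * ((q : ZMod p) ^ k) = 1 := by
      rw [← pow_add]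
      have hkk : k + k = p - 1 := by omega
      rw [hkk, ← hd, pow_orderOf_eq_one]
    rcases mul_self_eq_one_iff.mp hx2 with h | h
    · exfalso
      have hdv : orderOf (q : ZMod p) ∣ k := orderOf_dvd_of_pow_eq_one h
      rw [hd] at hdv
      have := Nat.le_of_dvd (by omega) hdv
      omega
    · exact h
  have hmod4 : (q : ZMod 4) ^ k = -1 := by
    have h3 : (q : ZMod 4) = -1 := by rw [← ZMod.natCast_mod, hq4]; decide
    rw [h3, hkodd.neg_one_pow]
  have hmodn : ((q : ZMod (4 * p))) ^ k = -1 := by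
    apply e.injective
    rw [map_pow, map_neg, map_one, h2q]
    rw [Prod.pow_mk]
    rw [hmodp, hmod4]
    rfl
  have hdl : (4 * p) ∣ q ^ k + 1 := by
    rw [← ZMod.natCast_eq_zero_iff]
    push_cast
    rw [hmodn]; ring
  have key : ∀ g : F[X], Irreducible g → g ∣ ((X : F[X]) ^ (2 * p) + 1) →
      ∃ c : F, c ≠ 0 ∧ g.reverse = c • g := by
    intro g hg hdv
    apply aux_selfrecip F q (4 * p) k hq (by omega) hdl g hg
    have hfactor : (X ^ (4 * p) - 1 : F[X]) = (X ^ (2 * p) + 1) * (X ^ (2 * p) - 1) := by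
      ring
    exact hdv.trans ⟨X ^ (2 * p) - 1, hfactor⟩
  exact ⟨key g₁ hg₁ ⟨(X ^ 2 + 1) * g₂, by rw [hfac]; ring⟩,
    key g₂ hg₂ ⟨(X ^ 2 + 1) * g₁, by rw [hfac]; ring⟩⟩
end

section
/- Let q ≡ 3 (mod 4) be a prime power and p ≡ 3 (mod 4) an odd prime coprime to q. Then there exists an odd integer i with 0 ≤ i ≤ p − 2 such that q^i ≡ −1 (mod 4p) if and only if ord_p(q) ≡ 2 (mod 4), assuming ord_{4p}(q) = p − 1. -/
theorem stmt7 (p q : ℕ) (hp : p.Prime) (hp4 : p % 4 = 3) (hq : IsPrimePow q)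
    (hq4 : q % 4 = 3) (hcop : Nat.Coprime p q)
    (hord : orderOf (q : ZMod (4 * p)) = p - 1) :
    (∃ i : ℕ, Odd i ∧ i ≤ p - 2 ∧ (q : ZMod (4 * p)) ^ i = -1) ↔
      orderOf (q : ZMod p) % 4 = 2 := by
  have hp3 : 3 ≤ p := by omega
  haveI : Fact p.Prime := ⟨hp⟩
  haveI : Fact (2 < p) := ⟨by omega⟩
  have hpdvd : p ∣ 4 * p := Dvd.intro_left 4 rfl
  have hcop4 : Nat.Coprime 4 p := by
    have : ¬ (2 ∣ p) := by
      intro h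
      omega
    have h2 : Nat.Coprime 2 p := (Nat.coprime_primes Nat.prime_two hp).mpr (by omega)
    have : (4 : ℕ) = 2 * 2 := by norm_num
    rw [this]
    exact h2.mul h2
  set d := orderOf (q : ZMod p) with hd
  constructor
  · rintro ⟨i, hi_odd, _, hi⟩
    -- map down to ZMod p
    have hmap : (q : ZMod p) ^ i = -1 := by
      have h := congrArg (ZMod.castHom hpdvd (ZMod p)) hi
      rw [map_pow, map_natCast, map_neg, map_one] at h
      exact h
    have h2i : d ∣ i * 2 := by
      apply orderOf_dvd_of_pow_eq_one
      rw [pow_mul, hmap]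
      ring
    have hni : ¬ d ∣ i := by
      rw [orderOf_dvd_iff_pow_eq_one, hmap]
      exact ZMod.neg_one_ne_one
    have hdeven : 2 ∣ d := by
      by_contra h
      have hodd : Nat.Coprime d 2 :=
        (Nat.prime_two.coprime_iff_not_dvd.mpr h).symm
      exact hni (hodd.dvd_of_dvd_mul_right h2i)
    obtain ⟨k, hk⟩ := hdeven
    have hki : k ∣ i := by
      rcases h2i with ⟨c, hc⟩
      exact ⟨c, Nat.eq_of_mul_eq_mul_right (by norm_num : 0 < 2) (by rw [hc, hk]; ring)⟩
    have hkodd : k % 2 = 1 := by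
      obtain ⟨c, hc⟩ := hki
      rw [Nat.odd_iff] at hi_odd
      rcases Nat.even_or_odd k with he | ho
      · exfalso
        have := Nat.even_iff.mp (he.mul_right c)
        omega
      · exact Nat.odd_iff.mp ho
    omega
  · intro hd2
    -- d divides p - 1
    have hdvd1 : d ∣ p - 1 := by
      rw [← hord]
      have := orderOf_map_dvd (ZMod.castHom hpdvd (ZMod p)).toMonoidHom (q : ZMod (4 * p))
      simpa using this
    -- q ^ d ≡ 1 mod p
    have hqd : (q : ZMod p) ^ d = 1 := pow_orderOf_eq_one _
    have hqdm : q ^ d ≡ 1 [MOD p] := by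
      rw [← ZMod.natCast_eq_natCast_iff]
      push_cast
      exact hqd
    -- p - 1 divides 2 * d
    have hdvd2 : p - 1 ∣ 2 * d := by
      rw [← hord]
      apply orderOf_dvd_of_pow_eq_one
      have h4 : q ^ (2 * d) ≡ 1 [MOD 4] := by
        show q ^ (2 * d) % 4 = 1 % 4
        rw [Nat.pow_mod, hq4]
        rw [pow_mul, Nat.pow_mod]
        norm_num
      have hpmod : q ^ (2 * d) ≡ 1 [MOD p] := by
        calc q ^ (2 * d) = (q ^ d) ^ 2 := by rw [← pow_mul, mul_comm]
          _ ≡ 1 ^ 2 [MOD p] := hqdm.pow 2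
          _ = 1 := one_pow 2
      have hc := (Nat.modEq_and_modEq_iff_modEq_mul hcop4).mp ⟨h4, hpmod⟩
      calc (q : ZMod (4 * p)) ^ (2 * d) = ((q ^ (2 * d) : ℕ) : ZMod (4 * p)) := by push_cast; ring
        _ = ((1 : ℕ) : ZMod (4 * p)) := (ZMod.natCast_eq_natCast_iff _ _ _).mpr hc
        _ = 1 := Nat.cast_one
    -- conclude d = p - 1
    have hdp : d = p - 1 := by
      obtain ⟨c, hc⟩ := hdvd1
      obtain ⟨e, he⟩ := hdvd2
      have hdpos : d ≠ 0 := by omega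
      have hce : c * e = 2 := by
        have h1 : d * (c * e) = d * 2 := by
          rw [← mul_assoc, ← hc]
          omega
        have := Nat.eq_of_mul_eq_mul_left (Nat.pos_of_ne_zero hdpos) h1
        omega
      have hc2 : c = 1 ∨ c = 2 := by
        have hcd2 : c ∣ 2 := ⟨e, hce.symm⟩
        have hle := Nat.le_of_dvd (by norm_num) hcd2
        interval_cases c
        · simp at hce
        · left; rfl
        · right; rfl
      rcases hc2 with h | h
      · subst h; omega
      · -- c = 2 : p - 1 = 2 * d contradicts mod 4
        exfalso
        subst h
        omega
    -- now build the witness i = d / 2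
    refine ⟨d / 2, ?_, by omega, ?_⟩
    · rw [Nat.odd_iff]; omega
    · set i := d / 2 with hi
      have h2i : 2 * i = d := by omega
      -- component mod p : q^i = -1
      have hmp : (q : ZMod p) ^ i = -1 := by
        have hsq : ((q : ZMod p) ^ i) * ((q : ZMod p) ^ i) = 1 := by
          rw [← pow_add]
          have : i + i = d := by omega
          rw [this, hqd]
        rcases mul_self_eq_one_iff.mp hsq with h1 | h1
        · exfalso
          have : d ∣ i := orderOf_dvd_of_pow_eq_one h1
          have := Nat.le_of_dvd (by omega) this
          omega
        · exact h1
      -- component mod 4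
      have hm4 : ((q : ℤ) ^ i) ≡ -1 [ZMOD 4] := by
        have hq1 : (q : ℤ) ≡ -1 [ZMOD 4] := by
          have : (q : ℤ) % 4 = 3 := by omega
          unfold Int.ModEq
          omega
        calc (q : ℤ) ^ i ≡ (-1) ^ i [ZMOD 4] := hq1.pow i
          _ = -1 := Odd.neg_one_pow (by rw [Nat.odd_iff]; omega)
      have hmpz : ((q : ℤ) ^ i) ≡ -1 [ZMOD (p : ℤ)] := by
        rw [← ZMod.intCast_eq_intCast_iff]
        push_cast
        exact hmp
      have hcombined : ((q : ℤ) ^ i) ≡ -1 [ZMOD ((4 : ℤ) * p)] := by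
        apply (Int.modEq_and_modEq_iff_modEq_mul ?_).mp ⟨hm4, hmpz⟩
        simpa using hcop4
      have : (((q : ℤ) ^ i : ℤ) : ZMod (4 * p)) = ((-1 : ℤ) : ZMod (4 * p)) := by
        rw [ZMod.intCast_eq_intCast_iff]
        exact_mod_cast hcombined
      push_cast at this
      exact this
end

section
/- Let A, B be n × n matrices over F_q with A, Aᵗ, B, Bᵗ pairwise commuting and AAᵗ + BBᵗ + I_n = 0. Then the row space of G = [[I_n, 0, A, B], [0, I_n, −Bᵗ, Aᵗ]] is a self-dual code of length 4n and dimension 2n over F_q, i.e., the row space equals its own orthogonal complement under the standard bilinear form. -/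
open Matrix

/-- The dual code of a linear code `C ⊆ F^ι` under the standard dot product. -/
def dualCode {F : Type*} [Field F] {ι : Type*} [Fintype ι]
    (C : Submodule F (ι → F)) : Submodule F (ι → F) where
  carrier := {v | ∀ c ∈ C, dotProduct v c = 0}
  add_mem' := by
    intro a b ha hb c hc
    rw [add_dotProduct, ha c hc, hb c hc, add_zero]
  zero_mem' := by
    intro c hc
    rw [zero_dotProduct]
  smul_mem' := by
    intro r v hv c hc
    rw [smul_dotProduct, hv c hc, smul_zero]

theorem stmt14 (n : ℕ) (F : Type*) [Field F] [Fintype F]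
    (A B : Matrix (Fin n) (Fin n) F)
    (h1 : A * Aᵀ = Aᵀ * A) (h2 : A * B = B * A) (h3 : A * Bᵀ = Bᵀ * A)
    (h4 : Aᵀ * B = B * Aᵀ) (h5 : Aᵀ * Bᵀ = Bᵀ * Aᵀ) (h6 : B * Bᵀ = Bᵀ * B)
    (hself : A * Aᵀ + B * Bᵀ + 1 = 0) :
    letI G : Matrix (Fin n ⊕ Fin n) ((Fin n ⊕ Fin n) ⊕ (Fin n ⊕ Fin n)) F :=
      Matrix.of fun i => Sum.elim ((1 : Matrix (Fin n ⊕ Fin n) (Fin n ⊕ Fin n) F) i)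
        ((Matrix.fromBlocks A B (-Bᵀ) Aᵀ) i)
    letI C : Submodule F (((Fin n ⊕ Fin n) ⊕ (Fin n ⊕ Fin n)) → F) :=
      Submodule.span F (Set.range fun i => G i)
    C = dualCode C ∧ Module.finrank F C = 2 * n := by
  set G : Matrix (Fin n ⊕ Fin n) ((Fin n ⊕ Fin n) ⊕ (Fin n ⊕ Fin n)) F :=
    Matrix.of (fun i => Sum.elim ((1 : Matrix (Fin n ⊕ Fin n) (Fin n ⊕ Fin n) F) i)
      ((Matrix.fromBlocks A B (-Bᵀ) Aᵀ) i)) with hGdef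
  set C : Submodule F (((Fin n ⊕ Fin n) ⊕ (Fin n ⊕ Fin n)) → F) :=
    Submodule.span F (Set.range fun i => G i) with hCdef
  set M : Matrix (Fin n ⊕ Fin n) (Fin n ⊕ Fin n) F := Matrix.fromBlocks A B (-Bᵀ) Aᵀ with hM
  have hG : G = Matrix.fromCols 1 M := rfl
  have e1 : A * Aᵀ + B * Bᵀ = -1 := eq_neg_of_add_eq_zero_left hself
  have e2 : Bᵀ * B + Aᵀ * A = -1 := by rw [add_comm, ← h1, ← h6]; exact e1
  have hMMT : M * Mᵀ = -1 := by
    rw [hM, Matrix.fromBlocks_transpose, Matrix.fromBlocks_multiply]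
    simp only [Matrix.transpose_neg, Matrix.transpose_transpose, Matrix.mul_neg,
      Matrix.neg_mul, neg_neg]
    rw [e1, h2, h5, e2]
    ext (i | i) (j | j) <;>
      simp [Matrix.fromBlocks, Matrix.one_apply]
  have hGGT : G * Gᵀ = 0 := by
    rw [hG, Matrix.transpose_fromCols, Matrix.fromCols_mul_fromRows, hMMT]
    simp
  have hrow : ∀ i j, dotProduct (G i) (G j) = 0 := by
    intro i j
    have h0 : (G * Gᵀ) i j = 0 := by rw [hGGT]; rfl
    simpa [Matrix.mul_apply, dotProduct, Matrix.transpose_apply] using h0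
  have hle : C ≤ dualCode C := by
    rw [Submodule.span_le]
    rintro _ ⟨i, rfl⟩ c hc
    induction hc using Submodule.span_induction with
    | mem x hx => obtain ⟨j, rfl⟩ := hx; exact hrow i j
    | zero => simp
    | add x y _ _ hx hy => rw [dotProduct_add, hx, hy, add_zero]
    | smul r x _ hx => rw [dotProduct_smul, hx, smul_zero]
  -- linear independence of the rows of G
  have hli : LinearIndependent F (fun i => G i) := by
    apply LinearIndependent.of_comp (LinearMap.funLeft F F Sum.inl)
    have : ((LinearMap.funLeft F F Sum.inl) ∘ fun i => G i) =
        fun i => (1 : Matrix (Fin n ⊕ Fin n) (Fin n ⊕ Fin n) F) i := by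
      funext i; funext j; rfl
    rw [this, Fintype.linearIndependent_iff]
    intro g hg j
    have := congrFun hg j
    simpa [Matrix.one_apply, Finset.sum_ite_eq'] using this
  have hrank : Module.finrank F C = 2 * n := by
    have := finrank_span_eq_card hli
    simpa [two_mul] using this
  refine ⟨?_, hrank⟩
  -- the dot-product bilinear form
  set Bf : LinearMap.BilinForm F (((Fin n ⊕ Fin n) ⊕ (Fin n ⊕ Fin n)) → F) :=
    Matrix.toBilin' 1 with hBfdef
  have hBf : ∀ x y, Bf x y = dotProduct x y := by
    intro x y; rw [hBfdef, Matrix.toBilin'_apply', Matrix.one_mulVec]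
  have hrefl : Bf.IsRefl := by
    intro x y h
    rw [hBf, dotProduct_comm, ← hBf]; exact h
  have hnd : Bf.Nondegenerate := by
    apply Matrix.Nondegenerate.toBilin'
    apply Matrix.nondegenerate_of_det_ne_zero
    simp
  have hdc : dualCode C = Bf.orthogonal C := by
    ext v
    constructor
    · intro h c hc
      show Bf c v = 0
      rw [hBf, dotProduct_comm]
      exact h c hc
    · intro h c hc
      rw [dotProduct_comm, ← hBf]
      exact h c hc
  have hdim : Module.finrank F (dualCode C) = 2 * n := by
    rw [hdc, LinearMap.BilinForm.finrank_orthogonal hnd, hrank]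
    rw [Module.finrank_fintype_fun_eq_card]
    simp [Fintype.card_sum]
    omega
  exact Submodule.eq_of_le_of_finrank_le hle (by rw [hdim, hrank])
end
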